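/- Let A, B, X, Y, A', B', X', Y' be finitely-valued random variables on a common probability space and let t ≥ 0 be a real number. Suppose each of the ten joint entropies H[X,Y], H[A,X], H[A,Y], H[B,X], H[B,Y], H[X',Y'], H[A',X'], H[A',Y'], H[B',X'], H[B',Y'] is at most 3t. Then the minimum of the fifteen joint entropies H[A,B], H[A,X,Y], H[B,X,Y], H[A',B'], H[A',X',Y'], H[B',X',Y'], H[A',A], H[X',A], H[Y',A], H[A',X], H[X',X], H[Y',X], H[A',Y], H[X',Y], H[Y',Y] is at most (66/17)·t (in particular strictly less than 4t when t > 0). -/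

import Mathlib

noncomputable def entropy {Ω α : Type*} [Fintype Ω] (p : Ω → ℝ) (f : Ω → α) : ℝ :=
  letI := Classical.decEq α
  ∑ y ∈ Finset.univ.image f,
    -((∑ ω ∈ Finset.univ.filter (fun ω => f ω = y), p ω) *
        Real.logb 2 (∑ ω ∈ Finset.univ.filter (fun ω => f ω = y), p ω))

/-!
Let `R` be a copy of `A` that is conditionally independent of `(A, B)` given `(X, Y)`. Then
`(R, X, Y)` has the law of `(A, X, Y)`, and eleven instances of the submodularity of entropy in
the five variables `R, A, B, X, Y` add up to
`H[AB] + 4 H[AXY] + H[BXY] + H[A] + 2 H[X] + 2 H[Y] ≤ 3 H[AX] + 3 H[AY] + H[BX] + H[BY] + 3 H[XY]`,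
whose right-hand side is at most `33 t`. Hence one of `H[AB], H[AXY], H[BXY]` is at most
`66/17 t`, or one of `H[A], H[X], H[Y]` is at most `33/17 t`. The same holds for the primed
variables, and when both times a single entropy is small, subadditivity bounds the entropy of the
corresponding mixed pair by `66/17 t`.
-/

section EntropyInequalities

open Finset Real

section Mass

variable {Ω α β : Type*} [Fintype Ω]

noncomputable def mass (p : Ω → ℝ) (f : Ω → α) (a : α) : ℝ :=
  letI := Classical.decEq α
  ∑ ω ∈ univ.filter (fun ω => f ω = a), p ω

open Classical in
theorem mass_eq_sum_ite (p : Ω → ℝ) (f : Ω → α) (a : α) :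
    mass p f a = ∑ ω, if f ω = a then p ω else 0 :=
  sum_filter _ _

theorem mass_nonneg {p : Ω → ℝ} (hp : ∀ ω, 0 ≤ p ω) (f : Ω → α) (a : α) : 0 ≤ mass p f a :=
  sum_nonneg fun ω _ => hp ω

theorem mass_congr (p : Ω → ℝ) {f : Ω → α} {g : Ω → β} {a : α} {b : β}
    (h : ∀ ω, f ω = a ↔ g ω = b) : mass p f a = mass p g b := by
  classical
  rw [mass_eq_sum_ite, mass_eq_sum_ite]
  exact sum_congr rfl fun ω _ => if_congr (h ω) rfl rfl

theorem mass_eq_sum_mass_pair [Fintype β] (p : Ω → ℝ) (f : Ω → α) (g : Ω → β) (a : α) :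
    mass p f a = ∑ b, mass p (fun ω => (f ω, g ω)) (a, b) := by
  classical
  simp only [mass_eq_sum_ite, Prod.mk.injEq, ite_and]
  rw [sum_comm]
  exact sum_congr rfl fun ω _ => by split_ifs <;> simp

theorem sum_mass [Fintype α] (p : Ω → ℝ) (f : Ω → α) : ∑ a, mass p f a = ∑ ω, p ω := by
  classical
  simp only [mass_eq_sum_ite]
  rw [sum_comm]
  simp

open Classical in
theorem mass_comp [Fintype α] (p : Ω → ℝ) (f : Ω → α) (e : α → β) (b : β) :
    mass p (fun ω => e (f ω)) b = ∑ a with e a = b, mass p f a := by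
  classical
  simp only [mass_eq_sum_ite]
  rw [sum_comm]
  refine sum_congr rfl fun ω _ => ?_
  rw [sum_ite_eq]
  simp only [mem_filter, mem_univ, true_and]

theorem mass_le_mass_of_imp {p : Ω → ℝ} (hp : ∀ ω, 0 ≤ p ω) {f : Ω → α} {g : Ω → β} {a : α} {b : β}
    (h : ∀ ω, f ω = a → g ω = b) : mass p f a ≤ mass p g b := by
  classical
  simp only [mass_eq_sum_ite]
  exact sum_le_sum fun ω _ => by split_ifs <;> simp_all

theorem sum_mass_mul [Fintype α] (p : Ω → ℝ) (f : Ω → α) (φ : α → ℝ) :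
    ∑ a, mass p f a * φ a = ∑ ω, p ω * φ (f ω) := by
  classical
  simp only [mass_eq_sum_ite, sum_mul, ite_mul, zero_mul]
  rw [sum_comm]
  exact sum_congr rfl fun ω _ => by rw [sum_ite_eq]; simp

theorem entropy_eq_sum_negMulLog [Fintype α] (p : Ω → ℝ) (f : Ω → α) :
    entropy p f = (∑ a, negMulLog (mass p f a)) / log 2 := by
  classical
  rw [sum_div, entropy, ← sum_subset (subset_univ (univ.image f))]
  · refine sum_congr rfl fun a _ => ?_
    rw [negMulLog, logb, mass]
    ring
  · intro a _ ha
    have : mass p f a = 0 := sum_eq_zero fun ω hω =>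
      absurd (mem_image_of_mem f (mem_univ ω)) (by simpa [(mem_filter.mp hω).2] using ha)
    simp [this]

theorem entropy_eq_of_mass_eq {Ω' : Type*} [Fintype Ω'] [Fintype α] {p : Ω → ℝ} {q : Ω' → ℝ}
    {f : Ω → α} {g : Ω' → α} (h : ∀ a, mass p f a = mass q g a) : entropy p f = entropy q g := by
  simp only [entropy_eq_sum_negMulLog, h]

theorem entropy_comp_eq_of_mass_eq {Ω' : Type*} [Fintype Ω'] [Fintype α] [Fintype β]
    {p : Ω → ℝ} {q : Ω' → ℝ} {f : Ω → α} {g : Ω' → α} (h : ∀ a, mass p f a = mass q g a)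
    (e : α → β) : entropy p (fun ω => e (f ω)) = entropy q (fun ω => e (g ω)) :=
  entropy_eq_of_mass_eq fun b => by simp only [mass_comp, h]

theorem entropy_eq_sum_fiber (p : Ω → ℝ) (f : Ω → α) :
    entropy p f = ∑ ω, -(p ω * logb 2 (mass p f (f ω))) := by
  classical
  refine sum_image' _ fun ω _ => ?_
  have hfiber : ∀ j ∈ univ.filter (fun j => f j = f ω),
      -(p j * logb 2 (mass p f (f j))) = -(p j * logb 2 (mass p f (f ω))) :=
    fun j hj => by rw [(mem_filter.mp hj).2]
  rw [sum_congr rfl hfiber, sum_neg_distrib, ← sum_mul]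
  rfl

theorem entropy_congr (p : Ω → ℝ) {f : Ω → α} {g : Ω → β}
    (h : ∀ ω ω', f ω = f ω' ↔ g ω = g ω') : entropy p f = entropy p g := by
  simp only [entropy_eq_sum_fiber]
  exact sum_congr rfl fun ω _ => by rw [mass_congr p fun ω' => h ω' ω]

end Mass

section Submodularity

variable {Ω α β γ δ ε ζ : Type*} [Fintype Ω] [Fintype α] [Fintype β] [Fintype γ]
  {p : Ω → ℝ}

theorem sum_negMulLog_add_negMulLog_sum_le (m : α → β → ℝ) (hm : ∀ a b, 0 ≤ m a b) :
    ∑ a, ∑ b, negMulLog (m a b) + negMulLog (∑ a, ∑ b, m a b) ≤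
      ∑ a, negMulLog (∑ b, m a b) + ∑ b, negMulLog (∑ a, m a b) := by
  set r : α → ℝ := fun a => ∑ b, m a b
  set s : β → ℝ := fun b => ∑ a, m a b
  set T : ℝ := ∑ a, ∑ b, m a b
  have hr : ∀ a b, m a b ≤ r a := fun a b => single_le_sum (fun b _ => hm a b) (mem_univ b)
  have hs : ∀ a b, m a b ≤ s b := fun a b => single_le_sum (fun a _ => hm a b) (mem_univ a)
  have hT : ∀ a, r a ≤ T := fun a =>
    single_le_sum (fun a _ => sum_nonneg fun b _ => hm a b) (mem_univ a)
  have hsT : ∑ b, s b = T := sum_comm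
  -- `log x ≤ x - 1` at `x = r s / (T m)`
  have hpoint : ∀ a b,
      m a b * (log (r a) + log (s b) - log T - log (m a b)) ≤ r a * s b / T - m a b := by
    intro a b
    rcases (hm a b).eq_or_lt with h0 | hpos
    · rw [← h0, zero_mul, sub_zero]
      exact div_nonneg (mul_nonneg (h0 ▸ hr a b) (h0 ▸ hs a b)) (h0 ▸ (hr a b).trans (hT a))
    · have hra : 0 < r a := hpos.trans_le (hr a b)
      have hsb : 0 < s b := hpos.trans_le (hs a b)
      have hTp : 0 < T := hra.trans_le (hT a)
      have hlog := log_le_sub_one_of_pos (by positivity : 0 < r a * s b / (T * m a b))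
      rw [log_div (by positivity) (by positivity), log_mul hra.ne' hsb.ne',
        log_mul hTp.ne' hpos.ne'] at hlog
      calc m a b * (log (r a) + log (s b) - log T - log (m a b))
          ≤ m a b * (r a * s b / (T * m a b) - 1) :=
            mul_le_mul_of_nonneg_left (by linarith) hpos.le
        _ = r a * s b / T - m a b := by field_simp
  have hsum := sum_le_sum fun a (_ : a ∈ univ) => sum_le_sum fun b (_ : b ∈ univ) => hpoint a b
  have hlhs : ∑ a, ∑ b, m a b * (log (r a) + log (s b) - log T - log (m a b)) =
      ∑ a, r a * log (r a) + ∑ b, s b * log (s b) - T * log T -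
        ∑ a, ∑ b, m a b * log (m a b) := by
    simp only [mul_add, mul_sub, sum_add_distrib, sum_sub_distrib, ← sum_mul]
    rw [sum_comm (f := fun a b => m a b * log (s b))]
    simp only [← sum_mul]
    rfl
  have hrhs : ∑ a, ∑ b, (r a * s b / T - m a b) = T * T / T - T := by
    simp only [sum_sub_distrib, ← sum_div, ← mul_sum, ← sum_mul, hsT]
    rfl
  rw [hlhs, hrhs, mul_self_div_self, sub_self] at hsum
  simp only [negMulLog, neg_mul, sum_neg_distrib]
  linarith

theorem entropy_submodular (hp : ∀ ω, 0 ≤ p ω) (f : Ω → α) (g : Ω → β) (h : Ω → γ) :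
    entropy p h + entropy p (fun ω => ((h ω, f ω), g ω)) ≤
      entropy p (fun ω => (h ω, f ω)) + entropy p (fun ω => (h ω, g ω)) := by
  set m : γ → α → β → ℝ := fun c a b => mass p (fun ω => ((h ω, f ω), g ω)) ((c, a), b)
  have hhf : ∀ c a, mass p (fun ω => (h ω, f ω)) (c, a) = ∑ b, m c a b := fun c a =>
    mass_eq_sum_mass_pair p _ g (c, a)
  have hhg : ∀ c b, mass p (fun ω => (h ω, g ω)) (c, b) = ∑ a, m c a b := fun c b => by
    rw [mass_eq_sum_mass_pair p _ f (c, b)]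
    exact sum_congr rfl fun a _ => mass_congr p fun ω => by simp only [Prod.mk.injEq]; tauto
  have hh : ∀ c, mass p h c = ∑ a, ∑ b, m c a b := fun c => by
    rw [mass_eq_sum_mass_pair p h f c]
    exact sum_congr rfl fun a _ => hhf c a
  have hmi := sum_le_sum fun c (_ : c ∈ univ) =>
    sum_negMulLog_add_negMulLog_sum_le (m c) fun a b => mass_nonneg hp _ _
  simp only [entropy_eq_sum_negMulLog, Fintype.sum_prod_type, hhf, hhg, hh, ← add_div]
  rw [sum_add_distrib, sum_add_distrib] at hmi
  exact div_le_div_of_nonneg_right (by linarith) (log_nonneg one_le_two)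

theorem entropy_submodular_of_congr (hp : ∀ ω, 0 ≤ p ω) (f : Ω → α) (g : Ω → β) (h : Ω → γ)
    {FH : Ω → δ} {GH : Ω → ε} {FGH : Ω → ζ}
    (hFH : ∀ ω ω', FH ω = FH ω' ↔ f ω = f ω' ∧ h ω = h ω' := by
      intro ω ω'; simp only [Prod.mk.injEq] <;> tauto)
    (hGH : ∀ ω ω', GH ω = GH ω' ↔ g ω = g ω' ∧ h ω = h ω' := by
      intro ω ω'; simp only [Prod.mk.injEq] <;> tauto)
    (hFGH : ∀ ω ω', FGH ω = FGH ω' ↔ f ω = f ω' ∧ g ω = g ω' ∧ h ω = h ω' := by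
      intro ω ω'; simp only [Prod.mk.injEq] <;> tauto) :
    entropy p h + entropy p FGH ≤ entropy p FH + entropy p GH := by
  rw [entropy_congr p (f := FH) (g := fun ω => (h ω, f ω))
      fun ω ω' => by simp only [hFH, Prod.mk.injEq]; tauto,
    entropy_congr p (f := GH) (g := fun ω => (h ω, g ω))
      fun ω ω' => by simp only [hGH, Prod.mk.injEq]; tauto,
    entropy_congr p (f := FGH) (g := fun ω => ((h ω, f ω), g ω))
      fun ω ω' => by simp only [hFGH, Prod.mk.injEq]; tauto]
  exact entropy_submodular hp f g h

theorem entropy_const (hp1 : ∑ ω, p ω = 1) (c : δ) : entropy p (fun _ => c) = 0 := by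
  rw [entropy_congr p (g := fun _ => ()) (by simp), entropy_eq_sum_negMulLog,
    Fintype.sum_unique, ← Fintype.sum_unique (mass p _), sum_mass, hp1, negMulLog_one, zero_div]

theorem entropy_pair_le (hp : ∀ ω, 0 ≤ p ω) (hp1 : ∑ ω, p ω = 1) (f : Ω → α) (g : Ω → β) :
    entropy p (fun ω => (f ω, g ω)) ≤ entropy p f + entropy p g := by
  have := entropy_submodular_of_congr hp f g (fun _ => ()) (FH := f) (GH := g)
    (FGH := fun ω => (f ω, g ω)) (by simp) (by simp) (by simp)
  rw [entropy_const hp1] at this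
  linarith

theorem entropy_pair_le_of_le (hp : ∀ ω, 0 ≤ p ω) (hp1 : ∑ ω, p ω = 1) {f : Ω → α}
    {g : Ω → β} {c : ℝ} (hf : entropy p f ≤ c) (hg : entropy p g ≤ c) :
    entropy p (fun ω => (f ω, g ω)) ≤ 2 * c := by
  linarith [entropy_pair_le hp hp1 f g]

end Submodularity

section CondCopy

variable {Ω α σ τ : Type*} [Fintype Ω] {p : Ω → ℝ}

-- `P[A = a | S = s]`, with the junk value `0` when `P[S = s] = 0`
noncomputable def condProb (p : Ω → ℝ) (A : Ω → α) (S : Ω → σ) (s : σ) (a : α) : ℝ :=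
  mass p (fun ω => (S ω, A ω)) (s, a) / mass p S s

-- The law of `(ω, R)` where `R` is drawn from the conditional law of `A` given `S = S ω`: so
-- `(S, R)` has the law of `(S, A)`, and `R` is conditionally independent of everything on `Ω`
-- given `S`.
noncomputable def condCopy (p : Ω → ℝ) (A : Ω → α) (S : Ω → σ) (z : Ω × α) : ℝ :=
  p z.1 * condProb p A S (S z.1) z.2

theorem condCopy_nonneg (hp : ∀ ω, 0 ≤ p ω) (A : Ω → α) (S : Ω → σ) (z : Ω × α) :
    0 ≤ condCopy p A S z :=
  mul_nonneg (hp _) (div_nonneg (mass_nonneg hp _ _) (mass_nonneg hp _ _))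

variable [Fintype α]

theorem sum_condProb (p : Ω → ℝ) (A : Ω → α) (S : Ω → σ) {s : σ} (hs : mass p S s ≠ 0) :
    ∑ a, condProb p A S s a = 1 := by
  unfold condProb
  rw [← sum_div, ← mass_eq_sum_mass_pair, div_self hs]

theorem sum_condCopy (hp : ∀ ω, 0 ≤ p ω) (A : Ω → α) (S : Ω → σ) (ω : Ω) :
    ∑ a, condCopy p A S (ω, a) = p ω := by
  rcases (hp ω).eq_or_lt with h0 | hpos
  · simp [condCopy, ← h0]
  · have hS : p ω ≤ mass p S (S ω) := by
      classical
      exact single_le_sum (f := p) (fun ω _ => hp ω) (mem_filter.mpr ⟨mem_univ ω, rfl⟩)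
    simp only [condCopy, ← mul_sum, sum_condProb p A S (hpos.trans_le hS).ne', mul_one]

theorem mass_comp_fst_of_sum_eq {q : Ω × α → ℝ} (hq : ∀ ω, ∑ a, q (ω, a) = p ω)
    (F : Ω → τ) (t : τ) : mass q (fun z => F z.1) t = mass p F t := by
  classical
  simp only [mass_eq_sum_ite, Fintype.sum_prod_type]
  exact sum_congr rfl fun ω _ => by split_ifs <;> simp [hq]

theorem entropy_condCopy_fst [Fintype τ] (hp : ∀ ω, 0 ≤ p ω) (A : Ω → α) (S : Ω → σ)
    (F : Ω → τ) : entropy (condCopy p A S) (fun z => F z.1) = entropy p F :=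
  entropy_eq_of_mass_eq (mass_comp_fst_of_sum_eq (sum_condCopy hp A S) F)

theorem mass_condCopy_pair (A : Ω → α) (S : Ω → σ) {F : Ω → τ} {e : τ → σ}
    (hS : ∀ ω, e (F ω) = S ω) (t : τ) (a : α) :
    mass (condCopy p A S) (fun z => (F z.1, z.2)) (t, a) =
      mass p F t * condProb p A S (e t) a := by
  classical
  simp only [mass_eq_sum_ite, Fintype.sum_prod_type, sum_mul, Prod.mk.injEq, ite_and]
  refine sum_congr rfl fun ω _ => ?_
  split_ifs with hF
  · simp [condCopy, ← hS ω, hF]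
  · simp

theorem mass_condCopy_copy (hp : ∀ ω, 0 ≤ p ω) (A : Ω → α) (S : Ω → σ) (s : σ) (a : α) :
    mass (condCopy p A S) (fun z => (S z.1, z.2)) (s, a) =
      mass p (fun ω => (S ω, A ω)) (s, a) := by
  rw [mass_condCopy_pair A S (e := id) (fun _ => rfl), id, condProb]
  rcases (mass_nonneg hp S s).eq_or_lt with h0 | hpos
  · have : mass p (fun ω => (S ω, A ω)) (s, a) = 0 :=
      le_antisymm (h0 ▸ mass_le_mass_of_imp hp fun ω h => congrArg Prod.fst h)
        (mass_nonneg hp _ _)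
    rw [← h0, this, zero_mul]
  · exact mul_div_cancel₀ _ hpos.ne'

theorem entropy_condCopy_pair [Fintype σ] [Fintype τ] (hp : ∀ ω, 0 ≤ p ω) (A : Ω → α)
    (S : Ω → σ) {F : Ω → τ} {e : τ → σ} (hS : ∀ ω, e (F ω) = S ω) :
    entropy (condCopy p A S) (fun z => (F z.1, z.2)) =
      entropy p F + (∑ ω, p ω * ∑ a, negMulLog (condProb p A S (S ω) a)) / log 2 := by
  have hmarg : ∀ t, negMulLog (mass p F t) * ∑ a, condProb p A S (e t) a =
      negMulLog (mass p F t) := fun t => by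
    rcases (mass_nonneg hp F t).eq_or_lt with h0 | hpos
    · rw [← h0, negMulLog_zero, zero_mul]
    · have hle : mass p F t ≤ mass p S (e t) :=
        mass_le_mass_of_imp hp fun ω h => h ▸ (hS ω).symm
      rw [sum_condProb p A S (hpos.trans_le hle).ne', mul_one]
  simp only [entropy_eq_sum_negMulLog, Fintype.sum_prod_type, mass_condCopy_pair A S hS,
    negMulLog_mul, sum_add_distrib, ← sum_mul, ← mul_sum, mul_comm (∑ a, condProb p A S _ a),
    hmarg, ← add_div]
  rw [sum_mass_mul p F (fun t => ∑ a, negMulLog (condProb p A S (e t) a))]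
  simp only [hS]

theorem entropy_condCopy_condIndep [Fintype σ] [Fintype τ] (hp : ∀ ω, 0 ≤ p ω) (A : Ω → α)
    (S : Ω → σ) {F : Ω → τ} {e : τ → σ} (hS : ∀ ω, e (F ω) = S ω) :
    entropy (condCopy p A S) (fun z => (F z.1, z.2)) + entropy p S =
      entropy p F + entropy p (fun ω => (S ω, A ω)) := by
  have hcopy : entropy (condCopy p A S) (fun z => (S z.1, z.2)) =
      entropy p (fun ω => (S ω, A ω)) :=
    entropy_eq_of_mass_eq fun v => mass_condCopy_copy hp A S v.1 v.2
  rw [entropy_condCopy_pair hp A S hS, ← hcopy,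
    entropy_condCopy_pair hp A S (e := id) fun _ => rfl]
  ring

end CondCopy

section CopyInequality

variable {Ω ρ α β γ δ : Type*} [Fintype Ω] [Fintype ρ] [Fintype α] [Fintype β] [Fintype γ]
  [Fintype δ]

theorem entropy_inequality_of_condIndep {q : Ω → ℝ} (hq : ∀ ω, 0 ≤ q ω) (R : Ω → ρ)
    (A : Ω → α) (B : Ω → β) (X : Ω → γ) (Y : Ω → δ)
    (hCI : entropy q (fun ω => (R ω, A ω, B ω, X ω, Y ω)) + entropy q (fun ω => (X ω, Y ω)) =
      entropy q (fun ω => (A ω, B ω, X ω, Y ω)) + entropy q (fun ω => (R ω, X ω, Y ω))) :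
    entropy q (fun ω => (A ω, B ω)) + entropy q (fun ω => (A ω, X ω, Y ω)) +
        entropy q (fun ω => (B ω, X ω, Y ω)) + 3 * entropy q (fun ω => (R ω, X ω, Y ω)) +
        entropy q R + 2 * entropy q X + 2 * entropy q Y ≤
      entropy q (fun ω => (A ω, X ω)) + entropy q (fun ω => (A ω, Y ω)) +
        entropy q (fun ω => (B ω, X ω)) + entropy q (fun ω => (B ω, Y ω)) +
        2 * entropy q (fun ω => (R ω, X ω)) + 2 * entropy q (fun ω => (R ω, Y ω)) +
        3 * entropy q (fun ω => (X ω, Y ω)) := by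
  -- the sum of these eleven inequalities, with `hCI` eliminating `H[R,A,B,X,Y]` from three of them
  have h1 : entropy q R + entropy q (fun ω => (R ω, A ω, B ω)) ≤
      entropy q (fun ω => (R ω, A ω)) + entropy q (fun ω => (R ω, B ω)) :=
    entropy_submodular_of_congr hq A B R
  have h2 : entropy q X + entropy q (fun ω => (R ω, A ω, X ω)) ≤
      entropy q (fun ω => (A ω, X ω)) + entropy q (fun ω => (R ω, X ω)) :=
    entropy_submodular_of_congr hq A R X
  have h3 : entropy q Y + entropy q (fun ω => (R ω, A ω, Y ω)) ≤
      entropy q (fun ω => (A ω, Y ω)) + entropy q (fun ω => (R ω, Y ω)) :=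
    entropy_submodular_of_congr hq A R Y
  have h4 : entropy q (fun ω => (B ω, X ω, Y ω)) + entropy q (fun ω => (R ω, A ω, B ω, X ω, Y ω)) ≤
      entropy q (fun ω => (R ω, B ω, X ω, Y ω)) + entropy q (fun ω => (A ω, B ω, X ω, Y ω)) :=
    entropy_submodular_of_congr hq R A (fun ω => (B ω, X ω, Y ω))
  have h5 : entropy q X + entropy q (fun ω => (R ω, B ω, X ω)) ≤
      entropy q (fun ω => (B ω, X ω)) + entropy q (fun ω => (R ω, X ω)) :=
    entropy_submodular_of_congr hq B R X
  have h6 : entropy q Y + entropy q (fun ω => (R ω, B ω, Y ω)) ≤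
      entropy q (fun ω => (B ω, Y ω)) + entropy q (fun ω => (R ω, Y ω)) :=
    entropy_submodular_of_congr hq B R Y
  have h7 : entropy q (fun ω => (A ω, X ω, Y ω)) + entropy q (fun ω => (R ω, A ω, B ω, X ω, Y ω)) ≤
      entropy q (fun ω => (R ω, A ω, X ω, Y ω)) + entropy q (fun ω => (A ω, B ω, X ω, Y ω)) :=
    entropy_submodular_of_congr hq R B (fun ω => (A ω, X ω, Y ω))
  have h8 : entropy q (fun ω => (R ω, A ω)) + entropy q (fun ω => (R ω, A ω, X ω, Y ω)) ≤
      entropy q (fun ω => (R ω, A ω, X ω)) + entropy q (fun ω => (R ω, A ω, Y ω)) :=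
    entropy_submodular_of_congr hq X Y (fun ω => (R ω, A ω))
  have h9 : entropy q (fun ω => (R ω, B ω)) + entropy q (fun ω => (R ω, B ω, X ω, Y ω)) ≤
      entropy q (fun ω => (R ω, B ω, X ω)) + entropy q (fun ω => (R ω, B ω, Y ω)) :=
    entropy_submodular_of_congr hq X Y (fun ω => (R ω, B ω))
  have h10 : entropy q (fun ω => (A ω, B ω, Y ω)) +
        entropy q (fun ω => (R ω, A ω, B ω, X ω, Y ω)) ≤
      entropy q (fun ω => (R ω, A ω, B ω, Y ω)) + entropy q (fun ω => (A ω, B ω, X ω, Y ω)) :=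
    entropy_submodular_of_congr hq R X (fun ω => (A ω, B ω, Y ω))
  have h11 : entropy q (fun ω => (A ω, B ω)) + entropy q (fun ω => (R ω, A ω, B ω, Y ω)) ≤
      entropy q (fun ω => (R ω, A ω, B ω)) + entropy q (fun ω => (A ω, B ω, Y ω)) :=
    entropy_submodular_of_congr hq R Y (fun ω => (A ω, B ω))
  linarith

theorem entropy_copy_inequality {p : Ω → ℝ} (hp : ∀ ω, 0 ≤ p ω) (A : Ω → α) (B : Ω → β)
    (X : Ω → γ) (Y : Ω → δ) :
    entropy p (fun ω => (A ω, B ω)) + 4 * entropy p (fun ω => (A ω, X ω, Y ω)) +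
        entropy p (fun ω => (B ω, X ω, Y ω)) + entropy p A + 2 * entropy p X +
        2 * entropy p Y ≤
      3 * entropy p (fun ω => (A ω, X ω)) + 3 * entropy p (fun ω => (A ω, Y ω)) +
        entropy p (fun ω => (B ω, X ω)) + entropy p (fun ω => (B ω, Y ω)) +
        3 * entropy p (fun ω => (X ω, Y ω)) := by
  set S : Ω → γ × δ := fun ω => (X ω, Y ω)
  set q := condCopy p A S
  have hlaw := fun v : (γ × δ) × α => mass_condCopy_copy hp A S v.1 v.2
  have hRXY := entropy_comp_eq_of_mass_eq hlaw fun v => (v.2, v.1.1, v.1.2)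
  have hXY := entropy_condCopy_fst hp A S S
  have hCI : entropy q (fun z => (z.2, A z.1, B z.1, X z.1, Y z.1)) +
        entropy q (fun z => (X z.1, Y z.1)) =
      entropy q (fun z => (A z.1, B z.1, X z.1, Y z.1)) +
        entropy q (fun z => (z.2, X z.1, Y z.1)) := by
    have hindep := entropy_condCopy_condIndep hp A S (F := fun ω => (A ω, B ω, X ω, Y ω))
      (e := fun v => v.2.2) fun _ => rfl
    rw [entropy_congr p (f := fun ω => (S ω, A ω)) (g := fun ω => (A ω, X ω, Y ω))
      fun ω ω' => by simp only [S, Prod.mk.injEq]; tauto] at hindep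
    rw [entropy_congr q (g := fun z => ((A z.1, B z.1, X z.1, Y z.1), z.2))
      fun ω ω' => by simp only [Prod.mk.injEq]; tauto]
    linarith [entropy_condCopy_fst hp A S (fun ω => (A ω, B ω, X ω, Y ω))]
  have key := entropy_inequality_of_condIndep (condCopy_nonneg hp A S) Prod.snd
    (fun z => A z.1) (fun z => B z.1) (fun z => X z.1) (fun z => Y z.1) hCI
  linarith [entropy_condCopy_fst hp A S X, entropy_condCopy_fst hp A S Y,
    entropy_condCopy_fst hp A S (fun ω => (A ω, B ω)),
    entropy_condCopy_fst hp A S (fun ω => (A ω, X ω)),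
    entropy_condCopy_fst hp A S (fun ω => (A ω, Y ω)),
    entropy_condCopy_fst hp A S (fun ω => (B ω, X ω)),
    entropy_condCopy_fst hp A S (fun ω => (B ω, Y ω)),
    entropy_condCopy_fst hp A S (fun ω => (A ω, X ω, Y ω)),
    entropy_condCopy_fst hp A S (fun ω => (B ω, X ω, Y ω)),
    entropy_comp_eq_of_mass_eq hlaw Prod.snd,
    entropy_comp_eq_of_mass_eq hlaw fun v => (v.2, v.1.1),
    entropy_comp_eq_of_mass_eq hlaw fun v => (v.2, v.1.2)]

-- If each joint term exceeded `2 u` and each single one `u`, with `u = 33/17 t`, the left-hand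
-- side of `entropy_copy_inequality` would exceed `(2 + 8 + 2 + 1 + 2 + 2) u = 33 t`.
theorem entropy_small_of_pairs_le {p : Ω → ℝ} (hp : ∀ ω, 0 ≤ p ω) (A : Ω → α) (B : Ω → β)
    (X : Ω → γ) (Y : Ω → δ) {t : ℝ}
    (hXY : entropy p (fun ω => (X ω, Y ω)) ≤ 3 * t)
    (hAX : entropy p (fun ω => (A ω, X ω)) ≤ 3 * t)
    (hAY : entropy p (fun ω => (A ω, Y ω)) ≤ 3 * t)
    (hBX : entropy p (fun ω => (B ω, X ω)) ≤ 3 * t)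
    (hBY : entropy p (fun ω => (B ω, Y ω)) ≤ 3 * t) :
    entropy p (fun ω => (A ω, B ω)) ≤ 2 * (33 / 17 * t) ∨
      entropy p (fun ω => (A ω, X ω, Y ω)) ≤ 2 * (33 / 17 * t) ∨
      entropy p (fun ω => (B ω, X ω, Y ω)) ≤ 2 * (33 / 17 * t) ∨
      entropy p A ≤ 33 / 17 * t ∨ entropy p X ≤ 33 / 17 * t ∨ entropy p Y ≤ 33 / 17 * t := by
  have := entropy_copy_inequality hp A B X Y
  by_contra! h
  linarith

end CopyInequality

end EntropyInequalities

theorem entropic_bound_eight_vars_general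
    {Ω α₁ α₂ α₃ α₄ β₁ β₂ β₃ β₄ : Type*} [Fintype Ω]
    [Fintype α₁] [Fintype α₂] [Fintype α₃] [Fintype α₄]
    [Fintype β₁] [Fintype β₂] [Fintype β₃] [Fintype β₄]
    (p : Ω → ℝ) (hp : ∀ ω, 0 ≤ p ω) (hp1 : ∑ ω, p ω = 1)
    (A : Ω → α₁) (B : Ω → α₂) (X : Ω → α₃) (Y : Ω → α₄)
    (A' : Ω → β₁) (B' : Ω → β₂) (X' : Ω → β₃) (Y' : Ω → β₄)
    (t : ℝ)
    (hXY : entropy p (fun ω => (X ω, Y ω)) ≤ 3 * t)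
    (hAX : entropy p (fun ω => (A ω, X ω)) ≤ 3 * t)
    (hAY : entropy p (fun ω => (A ω, Y ω)) ≤ 3 * t)
    (hBX : entropy p (fun ω => (B ω, X ω)) ≤ 3 * t)
    (hBY : entropy p (fun ω => (B ω, Y ω)) ≤ 3 * t)
    (hXY' : entropy p (fun ω => (X' ω, Y' ω)) ≤ 3 * t)
    (hAX' : entropy p (fun ω => (A' ω, X' ω)) ≤ 3 * t)
    (hAY' : entropy p (fun ω => (A' ω, Y' ω)) ≤ 3 * t)
    (hBX' : entropy p (fun ω => (B' ω, X' ω)) ≤ 3 * t)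
    (hBY' : entropy p (fun ω => (B' ω, Y' ω)) ≤ 3 * t) :
    List.foldr min (entropy p (fun ω => (Y' ω, Y ω)))
      [entropy p (fun ω => (A ω, B ω)),
       entropy p (fun ω => (A ω, X ω, Y ω)),
       entropy p (fun ω => (B ω, X ω, Y ω)),
       entropy p (fun ω => (A' ω, B' ω)),
       entropy p (fun ω => (A' ω, X' ω, Y' ω)),
       entropy p (fun ω => (B' ω, X' ω, Y' ω)),
       entropy p (fun ω => (A' ω, A ω)),
       entropy p (fun ω => (X' ω, A ω)),
       entropy p (fun ω => (Y' ω, A ω)),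
       entropy p (fun ω => (A' ω, X ω)),
       entropy p (fun ω => (X' ω, X ω)),
       entropy p (fun ω => (Y' ω, X ω)),
       entropy p (fun ω => (A' ω, Y ω)),
       entropy p (fun ω => (X' ω, Y ω))]
      ≤ (66 / 17) * t := by
  rw [show (66 / 17 : ℝ) * t = 2 * (33 / 17 * t) by ring]
  simp only [List.foldr_cons, List.foldr_nil, min_le_iff]
  obtain h | h | h | hZ := entropy_small_of_pairs_le hp A B X Y hXY hAX hAY hBX hBY
  · simp [h]
  · simp [h]
  · simp [h]
  obtain h | h | h | hZ' := entropy_small_of_pairs_le hp A' B' X' Y' hXY' hAX' hAY' hBX' hBY'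
  · simp [h]
  · simp [h]
  · simp [h]
  rcases hZ with hZ | hZ | hZ <;> rcases hZ' with hZ' | hZ' | hZ' <;>
    simp [entropy_pair_le_of_le hp hp1 hZ' hZ]

/-- If each of the ten joint entropies `H[XY], H[AX], H[AY], H[BX], H[BY],
H[X'Y'], H[A'X'], H[A'Y'], H[B'X'], H[B'Y']` is at most `3t`, then the minimum
of the fifteen joint entropies `H[AB], H[AXY], H[BXY], H[A'B'], H[A'X'Y'],
H[B'X'Y'], H[A'A], H[X'A], H[Y'A], H[A'X], H[X'X], H[Y'X], H[A'Y], H[X'Y],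
H[Y'Y]` is at most `(66/17)·t`. -/
theorem entropic_bound_eight_vars
    {Ω α₁ α₂ α₃ α₄ β₁ β₂ β₃ β₄ : Type*} [Fintype Ω]
    [Fintype α₁] [Fintype α₂] [Fintype α₃] [Fintype α₄]
    [Fintype β₁] [Fintype β₂] [Fintype β₃] [Fintype β₄]
    (p : Ω → ℝ) (hp : ∀ ω, 0 ≤ p ω) (hp1 : ∑ ω, p ω = 1)
    (A : Ω → α₁) (B : Ω → α₂) (X : Ω → α₃) (Y : Ω → α₄)
    (A' : Ω → β₁) (B' : Ω → β₂) (X' : Ω → β₃) (Y' : Ω → β₄)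
    (t : ℝ) (ht : 0 ≤ t)
    (hXY : entropy p (fun ω => (X ω, Y ω)) ≤ 3 * t)
    (hAX : entropy p (fun ω => (A ω, X ω)) ≤ 3 * t)
    (hAY : entropy p (fun ω => (A ω, Y ω)) ≤ 3 * t)
    (hBX : entropy p (fun ω => (B ω, X ω)) ≤ 3 * t)
    (hBY : entropy p (fun ω => (B ω, Y ω)) ≤ 3 * t)
    (hXY' : entropy p (fun ω => (X' ω, Y' ω)) ≤ 3 * t)
    (hAX' : entropy p (fun ω => (A' ω, X' ω)) ≤ 3 * t)
    (hAY' : entropy p (fun ω => (A' ω, Y' ω)) ≤ 3 * t)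
    (hBX' : entropy p (fun ω => (B' ω, X' ω)) ≤ 3 * t)
    (hBY' : entropy p (fun ω => (B' ω, Y' ω)) ≤ 3 * t) :
    List.foldr min (entropy p (fun ω => (Y' ω, Y ω)))
      [entropy p (fun ω => (A ω, B ω)),
       entropy p (fun ω => (A ω, X ω, Y ω)),
       entropy p (fun ω => (B ω, X ω, Y ω)),
       entropy p (fun ω => (A' ω, B' ω)),
       entropy p (fun ω => (A' ω, X' ω, Y' ω)),
       entropy p (fun ω => (B' ω, X' ω, Y' ω)),
       entropy p (fun ω => (A' ω, A ω)),
       entropy p (fun ω => (X' ω, A ω)),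
       entropy p (fun ω => (Y' ω, A ω)),
       entropy p (fun ω => (A' ω, X ω)),
       entropy p (fun ω => (X' ω, X ω)),
       entropy p (fun ω => (Y' ω, X ω)),
       entropy p (fun ω => (A' ω, Y ω)),
       entropy p (fun ω => (X' ω, Y ω))]
      ≤ (66 / 17) * t :=
  entropic_bound_eight_vars_general p hp hp1 A B X Y A' B' X' Y' t hXY hAX hAY hBX hBY hXY' hAX'
    hAY' hBX' hBY'
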